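/- Closability of the input–state map: for every τ > 0, if (f_n) is a sequence in M with ∫₀^τ ‖f_n(s)‖² ds → 0 and u^{f_n}(τ) → y in H, then y = 0; i.e., the map f|_{[0,τ]} ↦ u^f(τ), defined on M as a subset of L²([0,τ]; K), is closable as a map from L²([0,τ]; K) to H. -/

import Mathlib

open MeasureTheory
open scoped ComplexInnerProductSpace

variable {H : Type*} [NormedAddCommGroup H] [InnerProductSpace ℂ H] [CompleteSpace H]

/-- `Iᵗ = L^{-1/2}·sin(t·L^{1/2})`, realized by applying the continuous functional calculus of
the bounded positive self-adjoint operator `T = L⁻¹` to the continuous function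
`hₜ(x) = √x·sin(t/√x)` (for `x > 0`, extended by `0` at `x ≤ 0`). -/
noncomputable def waveOp (T : H →L[ℂ] H) (t : ℝ) : H →L[ℂ] H :=
  cfc (fun x : ℝ => if 0 < x then Real.sqrt x * Real.sin (t / Real.sqrt x) else 0) T

/-- The class `M` of smooth controls: smooth `K`-valued functions of time vanishing near `t = 0`
(all time functions are extended by zero to `t < 0`). -/
def IsSmoothControl (K : Submodule ℂ H) (f : ℝ → H) : Prop :=
  ContDiff ℝ (⊤ : ℕ∞) f ∧ (∀ t, f t ∈ K) ∧ ∃ ε > 0, ∀ t ≤ ε, f t = 0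

/-- The wave `u^f(t) = -f(t) + ∫₀ᵗ I^{t-s} f''(s) ds` (Bochner integral). -/
noncomputable def wave (T : H →L[ℂ] H) (f : ℝ → H) (t : ℝ) : H :=
  -f t + ∫ s in (0:ℝ)..t, waveOp T (t - s) (deriv (deriv f) s)

/-- The context of the paper: `L₀` is a closed, densely defined, symmetric, positive definite
operator in the Hilbert space `H`; `L` is its Friedrichs (self-adjoint) extension,
`L₀ ⊆ L ⊆ L₀*`, with an everywhere defined bounded self-adjoint positive injective inverse `T`;
`K = ker L₀*`.  The boundary operators are `Γ₁y = T(L₀*y) − y` and `Γ₂y = P(L₀*y)`, where `P`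
is the orthogonal projection onto `K`. -/
structure Setting (L₀ L : H →ₗ.[ℂ] H) (T : H →L[ℂ] H) (K : Submodule ℂ H) : Prop where
  dense_domain : Dense (L₀.domain : Set H)
  closed : L₀.IsClosed
  symmetric : ∀ x y : L₀.domain, ⟪L₀ x, (y : H)⟫ = ⟪(x : H), L₀ y⟫
  posdef : ∃ γ : ℝ, 0 < γ ∧ ∀ x : L₀.domain, γ * ‖(x : H)‖ ^ 2 ≤ (⟪L₀ x, (x : H)⟫).re
  extension : L₀ ≤ L
  le_adjoint : L ≤ L₀.adjoint
  selfadjoint : L.adjoint = L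
  T_selfadjoint : IsSelfAdjoint T
  T_positive : ∀ x : H, 0 ≤ (⟪T x, x⟫).re
  T_injective : Function.Injective T
  T_inv_left : ∀ x : L.domain, T (L x) = x
  T_mem_domain : ∀ y : H, T y ∈ L.domain
  T_inv_right : ∀ y : H, ∀ hy : T y ∈ L.domain, L ⟨T y, hy⟩ = y
  kernel : ∀ x : H, x ∈ K ↔ ∃ hx : x ∈ L₀.adjoint.domain, L₀.adjoint ⟨x, hx⟩ = 0

/-- The reachable set `U^τ = {u^f(τ) : f ∈ M}` for `τ ≥ 0`, and `{0}` for `τ < 0`. -/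
def reachSet (K : Submodule ℂ H) (T : H →L[ℂ] H) (τ : ℝ) : Set H :=
  if 0 ≤ τ then {x | ∃ f, IsSmoothControl K f ∧ wave T f τ = x} else {0}

/-- The total reachable set `U = span ⋃_{τ>0} U^τ`. -/
def reachSpan (K : Submodule ℂ H) (T : H →L[ℂ] H) : Submodule ℂ H :=
  Submodule.span ℂ (⋃ τ ∈ Set.Ioi (0:ℝ), reachSet K T τ)

/-- The wave `v^ψ(t) = ∫₀ᵗ I^{t-s} ψ(s) ds` produced by a source `ψ` in system `β`. -/
noncomputable def sourceWave (T : H →L[ℂ] H) (ψ : ℝ → H) (t : ℝ) : H :=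
  ∫ s in (0:ℝ)..t, waveOp T (t - s) (ψ s)

/-!
With `T = L⁻¹`, the operators `A(t) = T² Iᵗ`, `B(t) = T² cos(t L^{1/2})` and `C(t) = T Iᵗ` are
`cfc` of the bounded symbols `x² hₜ(x)`, `x² cos(t/√x)` and `x hₜ(x)` at `T`, and `A' = B`,
`B' = -C` in operator norm: the scalar derivatives hold on `σ(T) ⊆ [0, ‖T‖]`, with second-order
Taylor remainders `O(|t' - t|²)` uniformly there. Since `A(0) = 0` and `B(0) = T²`, integrating
by parts twice in `T² ∫₀^τ I^{τ-s} f''(s) ds` gives `T² u^f(τ) = -∫₀^τ T I^{τ-s} f(s) ds`, so by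
Cauchy–Schwarz `‖T² u^f(τ)‖ ≤ ‖T‖^{3/2} (τ ∫₀^τ ‖f‖²)^{1/2}`. Hence `T² y = 0`, and `y = 0`
because `T` is injective.
-/

open Real Filter Topology

noncomputable def sinKernel (t x : ℝ) : ℝ := √x * sin (t / √x)

noncomputable def sqCosKernel (t x : ℝ) : ℝ := x * x * cos (t / √x)

lemma continuous_mul_comp_div_sqrt {φ g : ℝ → ℝ} (hφ : Continuous φ) (hφ0 : φ 0 = 0)
    (hg : Continuous g) (hg1 : ∀ y, |g y| ≤ 1) (t : ℝ) :
    Continuous fun x => φ x * g (t / √x) := by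
  refine continuous_iff_continuousAt.2 fun x₀ => ?_
  rcases lt_trichotomy x₀ 0 with hx₀ | rfl | hx₀
  · have hconst : (fun x => φ x * g 0) =ᶠ[𝓝 x₀] fun x => φ x * g (t / √x) := by
      filter_upwards [Iio_mem_nhds hx₀] with x hx
      rw [sqrt_eq_zero'.2 hx.le, div_zero]
    exact (hφ.mul continuous_const).continuousAt.congr hconst
  · have hbound : ∀ x, ‖φ x * g (t / √x)‖ ≤ ‖φ x‖ := fun x => by
      simpa [abs_mul] using mul_le_mul_of_nonneg_left (hg1 (t / √x)) (abs_nonneg (φ x))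
    have hφ' : Tendsto (fun x => ‖φ x‖) (𝓝 0) (𝓝 0) := by
      simpa [hφ0] using (hφ.tendsto 0).norm
    simpa [ContinuousAt, hφ0] using squeeze_zero_norm hbound hφ'
  · exact hφ.continuousAt.mul (hg.continuousAt.comp
      (continuousAt_const.div continuous_sqrt.continuousAt (sqrt_pos.2 hx₀).ne'))

lemma continuous_sinKernel (t : ℝ) : Continuous (sinKernel t) :=
  continuous_mul_comp_div_sqrt continuous_sqrt sqrt_zero continuous_sin abs_sin_le_one t

lemma continuous_sqCosKernel (t : ℝ) : Continuous (sqCosKernel t) :=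
  continuous_mul_comp_div_sqrt (continuous_id.mul continuous_id) (mul_zero 0) continuous_cos
    abs_cos_le_one t

lemma abs_sinKernel_le (t x : ℝ) : |sinKernel t x| ≤ √x := by
  rw [sinKernel, abs_mul, abs_of_nonneg (sqrt_nonneg x)]
  exact mul_le_of_le_one_right (sqrt_nonneg x) (abs_sin_le_one _)

lemma lipschitzWith_mul_comp_div {g : ℝ → ℝ} (hg : LipschitzWith 1 g) (r s : ℝ) :
    LipschitzWith ‖r / s‖₊ fun t => r * g (t / s) :=
  LipschitzWith.of_dist_le_mul fun t t' => by
    have h := hg.dist_le_mul (t / s) (t' / s)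
    rw [NNReal.coe_one, one_mul, dist_eq, dist_eq, ← sub_div, abs_div] at h
    rw [dist_eq, dist_eq, ← mul_sub, abs_mul, coe_nnnorm, norm_div, norm_eq_abs, norm_eq_abs,
      div_mul_eq_mul_div, mul_div_assoc]
    exact mul_le_mul_of_nonneg_left h (abs_nonneg r)

lemma lipschitzWith_sinKernel (x : ℝ) : LipschitzWith 1 fun t => sinKernel t x :=
  (lipschitzWith_mul_comp_div lipschitzWith_sin √x √x).weaken <| by
    rw [← NNReal.coe_le_coe, coe_nnnorm, NNReal.coe_one, norm_div]
    exact div_self_le_one _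

lemma lipschitzWith_neg_mul_sinKernel (x : ℝ) :
    LipschitzWith ‖x‖₊ fun t => -(x * sinKernel t x) := by
  have h := (lipschitzWith_mul_comp_div lipschitzWith_sin (-(x * √x)) √x).weaken
    (K' := ‖x‖₊) ?_
  · simpa only [sinKernel, neg_mul, mul_assoc] using h
  · rw [← NNReal.coe_le_coe, coe_nnnorm, coe_nnnorm, norm_div, norm_neg, norm_mul, mul_div_assoc]
    exact mul_le_of_le_one_right (norm_nonneg x) (div_self_le_one _)

lemma hasDerivAt_sq_mul_sinKernel {x : ℝ} (hx : 0 ≤ x) (t : ℝ) :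
    HasDerivAt (fun t => x * x * sinKernel t x) (sqCosKernel t x) t := by
  rcases hx.eq_or_lt with rfl | hx
  · simpa [sinKernel, sqCosKernel] using hasDerivAt_const t (0 : ℝ)
  · have hs : √x ≠ 0 := (sqrt_pos.2 hx).ne'
    refine ((((hasDerivAt_id t).div_const √x).sin.const_mul √x).const_mul (x * x)).congr_deriv ?_
    simp only [sqCosKernel, id]
    field_simp

lemma hasDerivAt_sqCosKernel {x : ℝ} (hx : 0 ≤ x) (t : ℝ) :
    HasDerivAt (fun t => sqCosKernel t x) (-(x * sinKernel t x)) t := by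
  rcases hx.eq_or_lt with rfl | hx
  · simpa [sinKernel, sqCosKernel] using hasDerivAt_const t (0 : ℝ)
  · have hs : √x ≠ 0 := (sqrt_pos.2 hx).ne'
    refine (((hasDerivAt_id t).div_const √x).cos.const_mul (x * x)).congr_deriv ?_
    simp only [sinKernel, id]
    field_simp
    rw [sq_sqrt hx.le]

lemma norm_sub_sub_smul_le_of_lipschitzWith {E : Type*} [NormedAddCommGroup E]
    [NormedSpace ℝ E] {u v : ℝ → E} {K : NNReal} (huv : ∀ t, HasDerivAt u (v t) t)
    (hv : LipschitzWith K v) (t t' : ℝ) : ‖u t' - u t - (t' - t) • v t‖ ≤ K * ‖t' - t‖ ^ 2 := by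
  have hderiv : ∀ s, HasDerivAt (fun s => u s - (s - t) • v t) (v s - v t) s := fun s =>
    ((huv s).sub (((hasDerivAt_id' s).sub_const t).smul_const (v t))).congr_deriv
      (by rw [one_smul])
  have hbound : ∀ s ∈ Set.uIcc t t', ‖v s - v t‖ ≤ K * ‖t' - t‖ := fun s hs => by
    rw [← dist_eq_norm, ← dist_eq_norm]
    refine (hv.dist_le_mul s t).trans ?_
    rw [dist_comm s, dist_comm t']
    gcongr
    exact Real.dist_left_le_of_mem_uIcc hs
  calc ‖u t' - u t - (t' - t) • v t‖
      = ‖(u t' - (t' - t) • v t) - (u t - (t - t) • v t)‖ := by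
        rw [sub_self, zero_smul, sub_zero, sub_right_comm]
    _ ≤ K * ‖t' - t‖ * ‖t' - t‖ :=
        (convex_uIcc t t').norm_image_sub_le_of_norm_hasDerivWithin_le
          (fun s _ => (hderiv s).hasDerivWithinAt) hbound Set.left_mem_uIcc Set.right_mem_uIcc
    _ = K * ‖t' - t‖ ^ 2 := by ring

theorem HasDerivAt.complex_clm_apply {E F : Type*} [NormedAddCommGroup E] [NormedSpace ℂ E]
    [NormedAddCommGroup F] [NormedSpace ℂ F] {c : ℝ → E →L[ℂ] F} {c' : E →L[ℂ] F}
    {u : ℝ → E} {u' : E} {x : ℝ} (hc : HasDerivAt c c' x) (hu : HasDerivAt u u' x) :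
    HasDerivAt (fun y => c y (u y)) (c' (u x) + c x u') x :=
  ((ContinuousLinearMap.restrictScalarsL ℂ E F ℝ ℝ).hasFDerivAt.comp_hasDerivAt x hc).clm_apply hu

theorem sq_intervalIntegral_le {g : ℝ → ℝ} {a b : ℝ} (hab : a ≤ b)
    (hg : IntervalIntegrable g volume a b)
    (hg2 : IntervalIntegrable (fun s => g s ^ 2) volume a b) :
    (∫ s in a..b, g s) ^ 2 ≤ (b - a) * ∫ s in a..b, g s ^ 2 := by
  have hquad : ∀ c : ℝ,
      0 ≤ (b - a) * (c * c) + (-2 * ∫ s in a..b, g s) * c + ∫ s in a..b, g s ^ 2 := fun c => by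
    have h := intervalIntegral.integral_mono_on hab (hg.const_mul (2 * c))
      (intervalIntegrable_const.add hg2) fun s _ => two_mul_le_add_sq c (g s)
    rw [intervalIntegral.integral_const_mul,
      intervalIntegral.integral_add intervalIntegrable_const hg2,
      intervalIntegral.integral_const, smul_eq_mul] at h
    nlinarith
  have := discrim_le_zero hquad
  rw [discrim] at this
  nlinarith

section FunctionalCalculus

variable {A : Type*} [CStarAlgebra A] {a : A}

lemma norm_le_norm_of_mem_spectrum {x : ℝ} (hx : x ∈ spectrum ℝ a) : ‖x‖ ≤ ‖a‖ := by
  cases subsingleton_or_nontrivial A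
  · simp [spectrum.of_subsingleton] at hx
  · exact spectrum.norm_le_norm_of_mem hx

lemma lipschitzWith_cfc {u : ℝ → ℝ → ℝ} {K : NNReal}
    (hu : ∀ t, ContinuousOn (u t) (spectrum ℝ a))
    (hK : ∀ x ∈ spectrum ℝ a, LipschitzWith K fun t => u t x) :
    LipschitzWith K fun t => cfc (u t) a :=
  LipschitzWith.of_dist_le_mul fun t t' => by
    rw [dist_eq_norm, ← cfc_sub (u t) (u t') a (hu t) (hu t')]
    exact norm_cfc_le (by positivity) fun x hx => (hK x hx).dist_le_mul t t'

lemma hasDerivAt_cfc {u v : ℝ → ℝ → ℝ} {K : NNReal}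
    (hu : ∀ t, ContinuousOn (u t) (spectrum ℝ a))
    (hv : ∀ t, ContinuousOn (v t) (spectrum ℝ a))
    (huv : ∀ x ∈ spectrum ℝ a, ∀ t, HasDerivAt (fun t => u t x) (v t x) t)
    (hK : ∀ x ∈ spectrum ℝ a, LipschitzWith K fun t => v t x) (t : ℝ) :
    HasDerivAt (fun t => cfc (u t) a) (cfc (v t) a) t := by
  have hbound : ∀ t', ‖cfc (u t') a - cfc (u t) a - (t' - t) • cfc (v t) a‖ ≤
      K * ‖t' - t‖ ^ 2 := fun t' => by
    rw [← cfc_sub (u t') (u t) a (hu t') (hu t), ← cfc_smul (t' - t) (v t) a (hv t),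
      ← cfc_sub (fun x => u t' x - u t x) (fun x => (t' - t) • v t x) a ((hu t').sub (hu t))
        ((hv t).const_smul (t' - t))]
    exact norm_cfc_le (by positivity) fun x hx =>
      norm_sub_sub_smul_le_of_lipschitzWith (huv x hx) (hK x hx) t t'
  rw [hasDerivAt_iff_isLittleO]
  refine (Asymptotics.IsBigO.of_bound K (Eventually.of_forall fun t' => ?_)).trans_isLittleO
    (Asymptotics.isLittleO_pow_sub_sub t one_lt_two)
  simpa using hbound t'

end FunctionalCalculus

section WaveOperator

variable (T : H →L[ℂ] H)

lemma waveOp_eq_cfc_sinKernel (t : ℝ) : waveOp T t = cfc (sinKernel t) T := by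
  unfold waveOp
  congr 1
  funext x
  split_ifs with hx
  · rfl
  · simp [sinKernel, sqrt_eq_zero'.2 (not_lt.1 hx)]

lemma waveOp_zero : waveOp T 0 = 0 := by
  have h : sinKernel 0 = fun _ => 0 := by
    funext x
    simp [sinKernel]
  rw [waveOp_eq_cfc_sinKernel, h, cfc_const_zero]

lemma continuous_waveOp : Continuous (waveOp T) := by
  have h := lipschitzWith_cfc (a := T) (fun t => (continuous_sinKernel t).continuousOn)
    fun x _ => lipschitzWith_sinKernel x
  simpa only [← waveOp_eq_cfc_sinKernel] using h.continuous

lemma norm_waveOp_le (t : ℝ) : ‖waveOp T t‖ ≤ √‖T‖ := by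
  rw [waveOp_eq_cfc_sinKernel]
  exact norm_cfc_le (sqrt_nonneg _) fun x hx => (abs_sinKernel_le t x).trans
    (sqrt_le_sqrt ((le_abs_self x).trans (norm_le_norm_of_mem_spectrum hx)))

lemma continuous_waveOp_sub_apply {g : ℝ → H} (hg : Continuous g) (τ : ℝ) :
    Continuous fun s => waveOp T (τ - s) (g s) :=
  ((continuous_waveOp T).comp (continuous_sub_left τ)).clm_apply hg

variable {T} (hT : 0 ≤ T)
include hT

lemma mem_Icc_of_mem_spectrum {x : ℝ} (hx : x ∈ spectrum ℝ T) : x ∈ Set.Icc 0 ‖T‖ :=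
  ⟨spectrum_nonneg_of_nonneg hT hx, (le_abs_self x).trans (norm_le_norm_of_mem_spectrum hx)⟩

lemma cfc_mul_sinKernel (t : ℝ) : cfc (fun x => x * sinKernel t x) T = T * waveOp T t := by
  rw [cfc_mul (fun x => x) (sinKernel t) T continuousOn_id (continuous_sinKernel t).continuousOn,
    cfc_id' ℝ T (IsSelfAdjoint.of_nonneg hT), waveOp_eq_cfc_sinKernel]

lemma cfc_sq_mul_sinKernel (t : ℝ) :
    cfc (fun x => x * x * sinKernel t x) T = T * T * waveOp T t := by
  simp_rw [mul_assoc _ _ (sinKernel t _)]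
  rw [cfc_mul (fun x => x) (fun x => x * sinKernel t x) T continuousOn_id
    (continuousOn_id.mul (continuous_sinKernel t).continuousOn), cfc_mul_sinKernel hT,
    cfc_id' ℝ T (IsSelfAdjoint.of_nonneg hT), mul_assoc]

lemma cfc_sqCosKernel_zero : cfc (sqCosKernel 0) T = T * T := by
  have h : sqCosKernel 0 = fun x => x * x := by
    funext x
    simp [sqCosKernel]
  rw [h, cfc_mul (fun x => x) (fun x => x) T, cfc_id' ℝ T (IsSelfAdjoint.of_nonneg hT)]

lemma hasDerivAt_sq_mul_waveOp (t : ℝ) :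
    HasDerivAt (fun t => T * T * waveOp T t) (cfc (sqCosKernel t) T) t := by
  simp_rw [← cfc_sq_mul_sinKernel hT]
  refine hasDerivAt_cfc (K := ‖T‖₊ * NNReal.sqrt ‖T‖₊)
    (fun t => (continuous_id.mul continuous_id |>.mul (continuous_sinKernel t)).continuousOn)
    (fun t => (continuous_sqCosKernel t).continuousOn)
    (fun x hx => hasDerivAt_sq_mul_sinKernel (mem_Icc_of_mem_spectrum hT hx).1)
    (fun x hx => (lipschitzWith_mul_comp_div lipschitzWith_cos (x * x) √x).weaken ?_) t
  obtain ⟨hx0, hxT⟩ := mem_Icc_of_mem_spectrum hT hx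
  rw [← NNReal.coe_le_coe, coe_nnnorm, NNReal.coe_mul, Real.coe_sqrt, coe_nnnorm, mul_div_assoc,
    div_sqrt, norm_mul, norm_of_nonneg hx0, norm_of_nonneg (sqrt_nonneg x)]
  gcongr

lemma hasDerivAt_cfc_sqCosKernel (t : ℝ) :
    HasDerivAt (fun t => cfc (sqCosKernel t) T) (-(T * waveOp T t)) t := by
  rw [← cfc_mul_sinKernel hT, ← cfc_neg]
  refine hasDerivAt_cfc (K := ‖T‖₊) (fun t => (continuous_sqCosKernel t).continuousOn)
    (fun t => (continuous_id.mul (continuous_sinKernel t)).neg.continuousOn)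
    (fun x hx => hasDerivAt_sqCosKernel (mem_Icc_of_mem_spectrum hT hx).1)
    (fun x hx => (lipschitzWith_neg_mul_sinKernel x).weaken ?_) t
  rw [← NNReal.coe_le_coe, coe_nnnorm, coe_nnnorm]
  exact norm_le_norm_of_mem_spectrum hx

theorem integral_sq_waveOp_deriv_deriv_add {f : ℝ → H} (hf : ContDiff ℝ 2 f)
    (hf0 : f =ᶠ[𝓝 0] 0) (τ : ℝ) :
    ∫ s in (0 : ℝ)..τ, (T (T (waveOp T (τ - s) (deriv (deriv f) s))) +
      T (waveOp T (τ - s) (f s))) = T (T (f τ)) := by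
  obtain ⟨hf₁, -, hf₂⟩ := (contDiff_succ_iff_deriv (n := 1)).1 hf
  have hdf : ∀ s, HasDerivAt f (deriv f s) s := fun s => (hf₁ s).hasDerivAt
  have hdf' : ∀ s, HasDerivAt (deriv f) (deriv (deriv f) s) s := fun s =>
    (hf₂.differentiable one_ne_zero s).hasDerivAt
  let A : ℝ → H →L[ℂ] H := fun s => T * T * waveOp T (τ - s)
  let B : ℝ → H →L[ℂ] H := fun s => cfc (sqCosKernel (τ - s)) T
  have hA : ∀ s, HasDerivAt A (-B s) s := fun s =>
    (hasDerivAt_sq_mul_waveOp hT (τ - s)).comp_const_sub τ s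
  have hB : ∀ s, HasDerivAt B (T * waveOp T (τ - s)) s := fun s => by
    simpa using (hasDerivAt_cfc_sqCosKernel hT (τ - s)).comp_const_sub τ s
  have hΨ : ∀ s, HasDerivAt (fun s => A s (deriv f s) + B s (f s))
      (T (T (waveOp T (τ - s) (deriv (deriv f) s))) + T (waveOp T (τ - s) (f s))) s := fun s => by
    refine (((hA s).complex_clm_apply (hdf' s)).add
      ((hB s).complex_clm_apply (hdf s))).congr_deriv ?_
    simp only [A, neg_apply]
    abel
  have hcont : Continuous fun s =>
      T (T (waveOp T (τ - s) (deriv (deriv f) s))) + T (waveOp T (τ - s) (f s)) :=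
    (T.continuous.comp (T.continuous.comp (continuous_waveOp_sub_apply T
      (hf₂.continuous_deriv le_rfl) τ))).add
      (T.continuous.comp (continuous_waveOp_sub_apply T hf.continuous τ))
  rw [intervalIntegral.integral_eq_sub_of_hasDerivAt (fun s _ => hΨ s)
    (hcont.intervalIntegrable _ _)]
  simp [A, B, waveOp_zero, cfc_sqCosKernel_zero hT, hf0.eq_of_nhds, hf0.deriv_eq]

theorem sq_apply_wave_eq {f : ℝ → H} (hf : ContDiff ℝ 2 f) (hf0 : f =ᶠ[𝓝 0] 0) (τ : ℝ) :
    T (T (wave T f τ)) = -∫ s in (0 : ℝ)..τ, T (waveOp T (τ - s) (f s)) := by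
  have hIf'' : Continuous fun s => waveOp T (τ - s) (deriv (deriv f) s) :=
    continuous_waveOp_sub_apply T
      (((contDiff_succ_iff_deriv (n := 1)).1 hf).2.2.continuous_deriv le_rfl) τ
  have hTIf'' : Continuous fun s => T (waveOp T (τ - s) (deriv (deriv f) s)) :=
    T.continuous.comp hIf''
  have hint₁ : IntervalIntegrable (fun s => T (T (waveOp T (τ - s) (deriv (deriv f) s))))
      volume 0 τ :=
    (T.continuous.comp hTIf'').intervalIntegrable _ _
  have hint₂ : IntervalIntegrable (fun s => T (waveOp T (τ - s) (f s))) volume 0 τ :=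
    (T.continuous.comp (continuous_waveOp_sub_apply T hf.continuous τ)).intervalIntegrable _ _
  have hparts := integral_sq_waveOp_deriv_deriv_add hT hf hf0 τ
  rw [intervalIntegral.integral_add hint₁ hint₂] at hparts
  rw [wave, map_add, map_add, map_neg, map_neg,
    ← T.intervalIntegral_comp_comm (hIf''.intervalIntegrable _ _),
    ← T.intervalIntegral_comp_comm (hTIf''.intervalIntegrable _ _), eq_sub_of_add_eq hparts]
  abel

theorem norm_sq_apply_wave_le {f : ℝ → H} (hf : ContDiff ℝ 2 f) (hf0 : f =ᶠ[𝓝 0] 0) {τ : ℝ}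
    (hτ : 0 ≤ τ) :
    ‖T (T (wave T f τ))‖ ≤ ‖T‖ * √‖T‖ * √(τ * ∫ s in (0 : ℝ)..τ, ‖f s‖ ^ 2) := by
  have hf' : Continuous fun s => ‖f s‖ := hf.continuous.norm
  have hpoint : ∀ s, ‖T (waveOp T (τ - s) (f s))‖ ≤ ‖T‖ * √‖T‖ * ‖f s‖ := fun s =>
    calc ‖T (waveOp T (τ - s) (f s))‖ ≤ ‖T‖ * (‖waveOp T (τ - s)‖ * ‖f s‖) :=
          T.le_opNorm_of_le ((waveOp T (τ - s)).le_opNorm (f s))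
      _ ≤ ‖T‖ * (√‖T‖ * ‖f s‖) := by gcongr; exact norm_waveOp_le T _
      _ = ‖T‖ * √‖T‖ * ‖f s‖ := by ring
  rw [sq_apply_wave_eq hT hf hf0, norm_neg]
  calc ‖∫ s in (0 : ℝ)..τ, T (waveOp T (τ - s) (f s))‖
      ≤ ∫ s in (0 : ℝ)..τ, ‖T‖ * √‖T‖ * ‖f s‖ :=
        intervalIntegral.norm_integral_le_of_norm_le hτ (Eventually.of_forall fun s _ => hpoint s)
          ((continuous_const.mul hf').intervalIntegrable _ _)
    _ = ‖T‖ * √‖T‖ * ∫ s in (0 : ℝ)..τ, ‖f s‖ := intervalIntegral.integral_const_mul _ _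
    _ ≤ ‖T‖ * √‖T‖ * √(τ * ∫ s in (0 : ℝ)..τ, ‖f s‖ ^ 2) := by
        gcongr
        refine (le_abs_self _).trans (abs_le_sqrt ?_)
        simpa using sq_intervalIntegral_le hτ (hf'.intervalIntegrable _ _)
          ((hf'.pow 2).intervalIntegrable _ _)

end WaveOperator

lemma IsSmoothControl.contDiff_two {E : Type*} [NormedAddCommGroup E] [InnerProductSpace ℂ E]
    {K : Submodule ℂ E} {f : ℝ → E} (hf : IsSmoothControl K f) : ContDiff ℝ 2 f :=
  hf.1.of_le (WithTop.coe_le_coe.2 le_top)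

lemma IsSmoothControl.eventuallyEq_zero {E : Type*} [NormedAddCommGroup E]
    [InnerProductSpace ℂ E] {K : Submodule ℂ E} {f : ℝ → E} (hf : IsSmoothControl K f) :
    f =ᶠ[𝓝 0] 0 := by
  obtain ⟨ε, hε, hf0⟩ := hf.2.2
  filter_upwards [Iic_mem_nhds hε] with t ht using hf0 t ht

lemma Setting.T_nonneg {L₀ L : H →ₗ.[ℂ] H} {T : H →L[ℂ] H} {K : Submodule ℂ H}
    (hs : Setting L₀ L T K) : 0 ≤ T := by
  rw [ContinuousLinearMap.nonneg_iff_isPositive]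
  exact ⟨hs.T_selfadjoint.isSymmetric, hs.T_positive⟩

theorem stmt7_general (L₀ L : H →ₗ.[ℂ] H) (T : H →L[ℂ] H) (K : Submodule ℂ H)
    (hs : Setting L₀ L T K) (τ : ℝ) (hτ : 0 < τ)
    (F : ℕ → ℝ → H) (hF : ∀ n, IsSmoothControl K (F n)) (y : H)
    (hnorm : Filter.Tendsto (fun n => ∫ s in (0:ℝ)..τ, ‖F n s‖ ^ 2) Filter.atTop (nhds 0))
    (hconv : Filter.Tendsto (fun n => wave T (F n) τ) Filter.atTop (nhds y)) :
    y = 0 := by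
  have hT : 0 ≤ T := hs.T_nonneg
  have hlim : Tendsto (fun n => T (T (wave T (F n) τ))) atTop (𝓝 0) := by
    refine squeeze_zero_norm (fun n => norm_sq_apply_wave_le hT (hF n).contDiff_two
      (hF n).eventuallyEq_zero hτ.le) ?_
    simpa using ((continuous_sqrt.tendsto _).comp (hnorm.const_mul τ)).const_mul (‖T‖ * √‖T‖)
  have hTTy : T (T y) = 0 :=
    tendsto_nhds_unique (((T.continuous.comp T.continuous).tendsto y).comp hconv) hlim
  apply hs.T_injective
  apply hs.T_injective
  simp [hTTy]

/-- closability of the input–state map. For every `τ > 0`, if `(f_n)` is a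
sequence in `M` with `∫₀^τ ‖f_n(s)‖² ds → 0` and `u^{f_n}(τ) → y` in `H`, then `y = 0`;
i.e. the map `f|_{[0,τ]} ↦ u^f(τ)` is closable from `L²([0,τ]; K)` to `H`. -/
theorem stmt7 (L₀ L : H →ₗ.[ℂ] H) (T : H →L[ℂ] H) (K : Submodule ℂ H)
    [K.HasOrthogonalProjection] (hs : Setting L₀ L T K) (τ : ℝ) (hτ : 0 < τ)
    (F : ℕ → ℝ → H) (hF : ∀ n, IsSmoothControl K (F n)) (y : H)
    (hnorm : Filter.Tendsto (fun n => ∫ s in (0:ℝ)..τ, ‖F n s‖ ^ 2) Filter.atTop (nhds 0))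
    (hconv : Filter.Tendsto (fun n => wave T (F n) τ) Filter.atTop (nhds y)) :
    y = 0 :=
  stmt7_general L₀ L T K hs τ hτ F hF y hnorm hconv
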